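/- Let H : ℝ² → ℝ be C³ and T the triangle with vertices (0,0), (2ε,0), (ε,√3ε). Then ∫_T H(x₁,x₂) dx₁dx₂ = (√3/2) ε ∫_0^{2ε} H(x₁, 0) dx₁ + O(ε³) as ε → 0. -/

import Mathlib

/-!
Slice the triangle vertically: over `x` it has height `φ x`, and as `H` is Lipschitz on a
neighbourhood, the column integral is `φ x * H (x, 0) + O(ε²)`. On each half of the triangle `φ`
is affine with mean `√3 ε / 2`, so replacing `φ x` by that mean changes the integral by
`∫ (φ x - √3 ε / 2) * (H (x, 0) - H (a, 0)) dx`, which is `O(ε³)` because `H (·, 0)` varies by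
`O(ε)` over a half of length `ε`.
-/

/-- Integral of `H` over the triangle with vertices `(0,0)`, `(2ε,0)`, `(ε,√3 ε)`. -/
noncomputable def triInt (H : ℝ × ℝ → ℝ) (ε : ℝ) : ℝ :=
  (∫ x in (0 : ℝ)..ε, ∫ y in (0 : ℝ)..(Real.sqrt 3 * x), H (x, y))
    + ∫ x in ε..(2 * ε), ∫ y in (0 : ℝ)..(Real.sqrt 3 * (2 * ε - x)), H (x, y)

open Set

section

variable {a b : ℝ} {K : NNReal}

theorem abs_sub_left_le_of_lipschitzOnWith {f : ℝ → ℝ} (hf : LipschitzOnWith K f (Icc a b))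
    {x : ℝ} (hx : x ∈ Icc a b) : |f x - f a| ≤ K * (b - a) :=
  calc |f x - f a| = dist (f x) (f a) := rfl
    _ ≤ K * dist x a := hf.dist_le_mul x hx a (left_mem_Icc.2 (hx.1.trans hx.2))
    _ ≤ K * (b - a) := by
        rw [Real.dist_eq, abs_of_nonneg (sub_nonneg.2 hx.1)]
        gcongr
        exact hx.2

theorem abs_intervalIntegral_sub_mul_le_of_lipschitzOnWith {f : ℝ → ℝ} (hab : a ≤ b)
    (hf : LipschitzOnWith K f (Icc a b)) :
    |(∫ x in a..b, f x) - (b - a) * f a| ≤ K * (b - a) ^ 2 := by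
  rw [← smul_eq_mul, ← intervalIntegral.integral_const,
    ← intervalIntegral.integral_sub (hf.continuousOn.intervalIntegrable_of_Icc hab)
      intervalIntegrable_const]
  calc ‖∫ x in a..b, (f x - f a)‖ ≤ K * (b - a) * |b - a| :=
        intervalIntegral.norm_integral_le_of_norm_le_const fun x hx =>
          abs_sub_left_le_of_lipschitzOnWith hf (Ioc_subset_Icc_self (uIoc_of_le hab ▸ hx))
    _ = K * (b - a) ^ 2 := by rw [abs_of_nonneg (sub_nonneg.2 hab)]; ring

/-- Against a weight of mean zero, only the oscillation of `g` contributes. -/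
theorem abs_intervalIntegral_mul_le_of_integral_eq_zero {w g : ℝ → ℝ} {A : ℝ} (hab : a ≤ b)
    (hw : ContinuousOn w (Icc a b)) (hw₀ : ∫ x in a..b, w x = 0)
    (hA : ∀ x ∈ Icc a b, |w x| ≤ A) (hg : LipschitzOnWith K g (Icc a b)) :
    |∫ x in a..b, w x * g x| ≤ A * K * (b - a) ^ 2 := by
  have hwg_int : IntervalIntegrable (fun x => w x * g x) MeasureTheory.volume a b :=
    (hw.mul hg.continuousOn).intervalIntegrable_of_Icc hab
  have hshift : ∫ x in a..b, w x * g x = ∫ x in a..b, w x * (g x - g a) := by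
    simp only [mul_sub]
    rw [intervalIntegral.integral_sub hwg_int ((hw.intervalIntegrable_of_Icc hab).mul_const _),
      intervalIntegral.integral_mul_const, hw₀, zero_mul, sub_zero]
  rw [hshift]
  calc ‖∫ x in a..b, w x * (g x - g a)‖ ≤ A * (K * (b - a)) * |b - a| :=
        intervalIntegral.norm_integral_le_of_norm_le_const fun x hx => ?_
    _ = A * K * (b - a) ^ 2 := by rw [abs_of_nonneg (sub_nonneg.2 hab)]; ring
  have hx' := Ioc_subset_Icc_self (uIoc_of_le hab ▸ hx)
  rw [Real.norm_eq_abs, abs_mul]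
  exact mul_le_mul (hA x hx') (abs_sub_left_le_of_lipschitzOnWith hg hx') (abs_nonneg _)
    ((abs_nonneg _).trans (hA x hx'))

variable {H : ℝ × ℝ → ℝ} {φ : ℝ → ℝ} {M : ℝ}

theorem abs_integral_subgraph_sub_integral_mul_le (hab : a ≤ b) (hH : Continuous H)
    (hHK : LipschitzOnWith K H (Icc a b ×ˢ Icc 0 M)) (hφ : Continuous φ)
    (hφM : MapsTo φ (Icc a b) (Icc 0 M)) :
    |(∫ x in a..b, ∫ y in 0..φ x, H (x, y)) - ∫ x in a..b, φ x * H (x, 0)|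
      ≤ K * M ^ 2 * (b - a) := by
  have hslice_cont : Continuous fun x => ∫ y in 0..φ x, H (x, y) :=
    intervalIntegral.continuous_parametric_intervalIntegral_of_continuous
      (f := fun x y => H (x, y)) hH hφ
  have hbase_cont : Continuous fun x => φ x * H (x, 0) := by fun_prop
  rw [← intervalIntegral.integral_sub (hslice_cont.intervalIntegrable _ _)
    (hbase_cont.intervalIntegrable _ _)]
  calc ‖∫ x in a..b, ((∫ y in 0..φ x, H (x, y)) - φ x * H (x, 0))‖ ≤ K * M ^ 2 * |b - a| :=
        intervalIntegral.norm_integral_le_of_norm_le_const fun x hx => ?_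
    _ = K * M ^ 2 * (b - a) := by rw [abs_of_nonneg (sub_nonneg.2 hab)]
  have hx' := Ioc_subset_Icc_self (uIoc_of_le hab ▸ hx)
  obtain ⟨hφ₀, hφM⟩ := hφM hx'
  have hslice : LipschitzOnWith K (fun y => H (x, y)) (Icc 0 (φ x)) := by
    simpa [Function.comp_def] using hHK.comp (LipschitzWith.prodMk_left x).lipschitzOnWith
      fun y hy => ⟨hx', hy.1, hy.2.trans hφM⟩
  calc ‖(∫ y in 0..φ x, H (x, y)) - φ x * H (x, 0)‖ ≤ K * (φ x - 0) ^ 2 := by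
        simpa using abs_intervalIntegral_sub_mul_le_of_lipschitzOnWith hφ₀ hslice
    _ ≤ K * M ^ 2 := by gcongr; linarith

theorem abs_integral_subgraph_sub_mul_integral_le (hab : a ≤ b) (hH : Continuous H)
    (hHK : LipschitzOnWith K H (Icc a b ×ˢ Icc 0 M)) (hφ : Continuous φ)
    (hφM : MapsTo φ (Icc a b) (Icc 0 M)) {c : ℝ} (hc : c ∈ Icc 0 M)
    (hφc : ∫ x in a..b, (φ x - c) = 0) :
    |(∫ x in a..b, ∫ y in 0..φ x, H (x, y)) - c * ∫ x in a..b, H (x, 0)|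
      ≤ K * M ^ 2 * (b - a) + M * K * (b - a) ^ 2 := by
  have hbase : LipschitzOnWith K (fun x => H (x, 0)) (Icc a b) := by
    simpa [Function.comp_def] using hHK.comp (LipschitzWith.prodMk_right 0).lipschitzOnWith
      fun x hx => ⟨hx, le_rfl, hc.1.trans hc.2⟩
  have hweight := abs_intervalIntegral_mul_le_of_integral_eq_zero hab
    (w := fun x => φ x - c) (A := M) (by fun_prop : Continuous fun x => φ x - c).continuousOn
    hφc (fun x hx => abs_sub_le_iff.2
      ⟨by linarith [(hφM hx).2, hc.1], by linarith [(hφM hx).1, hc.2]⟩) hbase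
  have hsplit : ∫ x in a..b, (φ x - c) * H (x, 0)
      = (∫ x in a..b, φ x * H (x, 0)) - c * ∫ x in a..b, H (x, 0) := by
    simp only [sub_mul]
    rw [intervalIntegral.integral_sub (by apply Continuous.intervalIntegrable; fun_prop)
      (by apply Continuous.intervalIntegrable; fun_prop), intervalIntegral.integral_const_mul]
  calc |(∫ x in a..b, ∫ y in 0..φ x, H (x, y)) - c * ∫ x in a..b, H (x, 0)|
      = |((∫ x in a..b, ∫ y in 0..φ x, H (x, y)) - ∫ x in a..b, φ x * H (x, 0))
          + ∫ x in a..b, (φ x - c) * H (x, 0)| := by rw [hsplit]; ring_nf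
    _ ≤ _ := abs_add_le _ _
    _ ≤ _ := add_le_add (abs_integral_subgraph_sub_integral_mul_le hab hH hHK hφ hφM) hweight

end

theorem integral_sqrt_three_mul_sub_eq_zero (ε : ℝ) :
    ∫ x in (0 : ℝ)..ε, (Real.sqrt 3 * x - Real.sqrt 3 / 2 * ε) = 0 := by
  rw [intervalIntegral.integral_sub (by apply Continuous.intervalIntegrable; fun_prop)
    intervalIntegrable_const, intervalIntegral.integral_const_mul, integral_id,
    intervalIntegral.integral_const, smul_eq_mul]
  ring

theorem integral_sqrt_three_mul_two_mul_sub_sub_eq_zero (ε : ℝ) :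
    ∫ x in ε..(2 * ε), (Real.sqrt 3 * (2 * ε - x) - Real.sqrt 3 / 2 * ε) = 0 := by
  rw [intervalIntegral.integral_sub (by apply Continuous.intervalIntegrable; fun_prop)
    intervalIntegrable_const, intervalIntegral.integral_const_mul,
    intervalIntegral.integral_sub intervalIntegrable_const intervalIntegral.intervalIntegrable_id,
    integral_id, intervalIntegral.integral_const, intervalIntegral.integral_const, smul_eq_mul,
    smul_eq_mul]
  ring

theorem triangle_integral_base_edge
    (H : ℝ × ℝ → ℝ) (hH : ContDiff ℝ 3 H) :
    ∃ C : ℝ, ∀ ε : ℝ, 0 < ε → ε ≤ 1 →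
      |triInt H ε - Real.sqrt 3 / 2 * ε * ∫ x in (0 : ℝ)..(2 * ε), H (x, 0)|
        ≤ C * ε ^ 3 := by
  obtain ⟨K, hK⟩ : ∃ K, LipschitzOnWith K H (Icc 0 2 ×ˢ Icc 0 2) :=
    (hH.of_le (by norm_num)).locallyLipschitz.locallyLipschitzOn.exists_lipschitzOnWith_of_compact
      (isCompact_Icc.prod isCompact_Icc)
  refine ⟨12 * K, fun ε hε hε₁ => ?_⟩
  have hs3 : Real.sqrt 3 ≤ 2 := Real.sqrt_le_iff.2 ⟨by norm_num, by norm_num⟩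
  have hs3₀ := Real.sqrt_nonneg 3
  have hbox {a b : ℝ} (ha : 0 ≤ a) (hb : b ≤ 2 * ε) :
      Icc a b ×ˢ Icc 0 (2 * ε) ⊆ Icc 0 2 ×ˢ Icc 0 2 :=
    prod_mono (Icc_subset_Icc ha (by linarith)) (Icc_subset_Icc le_rfl (by linarith))
  have hc : Real.sqrt 3 / 2 * ε ∈ Icc 0 (2 * ε) := ⟨by positivity, by nlinarith⟩
  have hleft := abs_integral_subgraph_sub_mul_integral_le hε.le hH.continuous
    (hK.mono (hbox le_rfl (by linarith))) (φ := fun x => Real.sqrt 3 * x) (by fun_prop)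
    (fun x hx => ⟨by nlinarith [hx.1], by nlinarith [hx.1, hx.2]⟩) hc
    (integral_sqrt_three_mul_sub_eq_zero ε)
  have hright := abs_integral_subgraph_sub_mul_integral_le (by linarith : ε ≤ 2 * ε)
    hH.continuous (hK.mono (hbox hε.le le_rfl)) (φ := fun x => Real.sqrt 3 * (2 * ε - x))
    (by fun_prop) (fun x hx => ⟨by nlinarith [hx.2], by nlinarith [hx.1, hx.2]⟩) hc
    (integral_sqrt_three_mul_two_mul_sub_sub_eq_zero ε)
  have hbase : Continuous fun x => H (x, 0) := by fun_prop
  rw [triInt, ← intervalIntegral.integral_add_adjacent_intervals (hbase.intervalIntegrable 0 ε)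
    (hbase.intervalIntegrable ε (2 * ε))]
  calc _ ≤ _ := (abs_add_le _ _).trans_eq' (by ring_nf)
    _ ≤ _ := add_le_add hleft hright
    _ = 12 * K * ε ^ 3 := by ring
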